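/- arXiv:2410.18407 — 3 statements merged into one kernel-verified Lean document; each statement's English description precedes it below -/
import Mathlib

section
/- Fix an integer p ≥ 0 and reals λ > 0 and Λ ≥ (2p+2)λ. The function η(x) = (λ/(2p+2))(eˣ−1)^{2p+2} − (Λ/2)x² is concave on (−∞, 0], and consequently for all a, b ≤ 0: (λ/(2p+2))(e^a−1)^{2p+2} ≤ (λ/(2p+2))(e^b−1)^{2p+2} + (Λ/2)(a−b)² + λe^b(e^b−1)^{2p+1}(a−b). -/
open Real

section aux

variable (p : ℕ) (lam Lam : ℝ)

private noncomputable def etaF (x : ℝ) : ℝ :=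
  lam / (2 * (p : ℝ) + 2) * (exp x - 1) ^ (2 * p + 2) - Lam / 2 * x ^ 2

private noncomputable def etaF' (x : ℝ) : ℝ :=
  lam * exp x * (exp x - 1) ^ (2 * p + 1) - Lam * x

private noncomputable def etaF'' (x : ℝ) : ℝ :=
  lam * exp x * (exp x - 1) ^ (2 * p + 1)
    + lam * (2 * (p : ℝ) + 1) * exp x * exp x * (exp x - 1) ^ (2 * p) - Lam

private lemma hasDerivAt_etaF (x : ℝ) : HasDerivAt (etaF p lam Lam) (etaF' p lam Lam x) x := by
  have h1 : HasDerivAt (fun x : ℝ => exp x - 1) (exp x) x :=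
    (Real.hasDerivAt_exp x).sub_const 1
  have h2 : HasDerivAt (fun x : ℝ => (exp x - 1) ^ (2 * p + 2))
      ((2 * (p : ℝ) + 2) * (exp x - 1) ^ (2 * p + 1) * exp x) x := by
    have := h1.pow (2 * p + 2)
    exact this.congr_deriv (by
    push_cast
    ring_nf)
  have h3 : HasDerivAt (fun x : ℝ => Lam / 2 * x ^ 2) (Lam * x) x := by
    have := (hasDerivAt_pow 2 x).const_mul (Lam / 2)
    exact this.congr_deriv (by
    ring)
  have hne : (2 * (p : ℝ) + 2) ≠ 0 := by positivity
  have := (h2.const_mul (lam / (2 * (p : ℝ) + 2))).sub h3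
  exact this.congr_deriv (by
  unfold etaF'
  field_simp)

private lemma hasDerivAt_etaF' (x : ℝ) : HasDerivAt (etaF' p lam Lam) (etaF'' p lam Lam x) x := by
  have h1 : HasDerivAt (fun x : ℝ => exp x - 1) (exp x) x :=
    (Real.hasDerivAt_exp x).sub_const 1
  have h2 : HasDerivAt (fun x : ℝ => (exp x - 1) ^ (2 * p + 1))
      ((2 * (p : ℝ) + 1) * (exp x - 1) ^ (2 * p) * exp x) x := by
    have := h1.pow (2 * p + 1)
    exact this.congr_deriv (by
    push_cast
    ring_nf)
  have h3 : HasDerivAt (fun x : ℝ => lam * exp x * (exp x - 1) ^ (2 * p + 1))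
      (lam * exp x * (exp x - 1) ^ (2 * p + 1)
        + lam * (2 * (p : ℝ) + 1) * exp x * exp x * (exp x - 1) ^ (2 * p)) x := by
    have := ((Real.hasDerivAt_exp x).const_mul lam).mul h2
    exact this.congr_deriv (by
    ring)
  have h4 : HasDerivAt (fun x : ℝ => Lam * x) Lam x := by
    simpa using (hasDerivAt_id x).const_mul Lam
  exact h3.sub h4

private lemma etaF''_nonpos (hlam : 0 < lam) (hLam : (2 * (p : ℝ) + 2) * lam ≤ Lam)
    {x : ℝ} (hx : x ≤ 0) : etaF'' p lam Lam x ≤ 0 := by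
  unfold etaF''
  set u := exp x with hu
  have hu0 : 0 < u := exp_pos x
  have hu1 : u ≤ 1 := exp_le_one_iff.mpr hx
  have heven : (u - 1) ^ (2 * p) = (1 - u) ^ (2 * p) := by
    rw [show u - 1 = -(1 - u) by ring, Even.neg_pow (even_two_mul p)]
  have hpow_nonneg : 0 ≤ (1 - u) ^ (2 * p) := pow_nonneg (by linarith) _
  have hpow_le : (1 - u) ^ (2 * p) ≤ 1 :=
    pow_le_one₀ (by linarith) (by linarith)
  -- first term nonpositive
  have h1 : lam * u * (u - 1) ^ (2 * p + 1) ≤ 0 := by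
    have : (u - 1) ^ (2 * p + 1) = (u - 1) * (1 - u) ^ (2 * p) := by
      rw [pow_succ, mul_comm, heven]
    rw [this]
    have h0 : (u - 1) * (1 - u) ^ (2 * p) ≤ 0 :=
      mul_nonpos_of_nonpos_of_nonneg (by linarith) hpow_nonneg
    calc lam * u * ((u - 1) * (1 - u) ^ (2 * p)) ≤ lam * u * 0 :=
          mul_le_mul_of_nonneg_left h0 (by positivity)
      _ = 0 := by ring
  -- second term bounded
  have h2 : lam * (2 * (p : ℝ) + 1) * u * u * (u - 1) ^ (2 * p) ≤ (2 * (p : ℝ) + 1) * lam := by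
    rw [heven]
    have hb : u * u * (1 - u) ^ (2 * p) ≤ 1 := by
      nlinarith
    have hcoef : (0 : ℝ) < lam * (2 * (p : ℝ) + 1) := by positivity
    nlinarith
  have hp : (0 : ℝ) ≤ (p : ℝ) := Nat.cast_nonneg p
  nlinarith

end aux

/-- For an integer `p ≥ 0`, `λ > 0` and `Λ ≥ (2p+2)λ`, the function
`η(x) = (λ/(2p+2))(eˣ-1)^{2p+2} - (Λ/2)x²` is concave on `(-∞, 0]`, and consequently
for all `a, b ≤ 0`:
`(λ/(2p+2))(eᵃ-1)^{2p+2} ≤ (λ/(2p+2))(eᵇ-1)^{2p+2} + (Λ/2)(a-b)² + λeᵇ(eᵇ-1)^{2p+1}(a-b)`. -/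
theorem eta_concave (p : ℕ) (lam Lam : ℝ) (hlam : 0 < lam)
    (hLam : (2 * (p : ℝ) + 2) * lam ≤ Lam) :
    ConcaveOn ℝ (Set.Iic (0 : ℝ))
      (fun x => lam / (2 * (p : ℝ) + 2) * (exp x - 1) ^ (2 * p + 2) - Lam / 2 * x ^ 2) ∧
    ∀ a b : ℝ, a ≤ 0 → b ≤ 0 →
      lam / (2 * (p : ℝ) + 2) * (exp a - 1) ^ (2 * p + 2)
        ≤ lam / (2 * (p : ℝ) + 2) * (exp b - 1) ^ (2 * p + 2)
          + Lam / 2 * (a - b) ^ 2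
          + lam * exp b * (exp b - 1) ^ (2 * p + 1) * (a - b) := by
  have hF := hasDerivAt_etaF p lam Lam
  have hF' := hasDerivAt_etaF' p lam Lam
  have hF'' : ∀ x ∈ Set.Iic (0 : ℝ), etaF'' p lam Lam x ≤ 0 :=
    fun x hx => etaF''_nonpos p lam Lam hlam hLam hx
  constructor
  · exact concaveOn_of_hasDerivWithinAt2_nonpos (convex_Iic 0)
      (fun x _ => (hF x).continuousAt.continuousWithinAt)
      (fun x hx => (hF x).hasDerivWithinAt)
      (fun x hx => (hF' x).hasDerivWithinAt)
      (fun x hx => hF'' x (interior_subset hx))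
  · intro a b ha hb
    -- F' is antitone on Iic 0
    have hanti : AntitoneOn (etaF' p lam Lam) (Set.Iic (0 : ℝ)) := by
      apply antitoneOn_of_hasDerivWithinAt_nonpos (convex_Iic 0)
        (fun x _ => (hF' x).continuousAt.continuousWithinAt)
        (fun x hx => (hF' x).hasDerivWithinAt)
        (fun x hx => hF'' x (interior_subset hx))
    set g : ℝ → ℝ := fun x => etaF p lam Lam x - etaF p lam Lam b
      - etaF' p lam Lam b * (x - b) with hg
    have hgderiv : ∀ x, HasDerivAt g (etaF' p lam Lam x - etaF' p lam Lam b) x := by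
      intro x
      have h1 : HasDerivAt (fun x : ℝ => etaF' p lam Lam b * (x - b))
          (etaF' p lam Lam b) x := by
        have := ((hasDerivAt_id x).sub_const b).const_mul (etaF' p lam Lam b)
        simpa using this
      exact ((hF x).sub_const (etaF p lam Lam b)).sub h1
    have hga : g a ≤ 0 := by
      rcases le_or_gt a b with hab | hab
      · -- a ≤ b : g is monotone on Iic b
        have hmono : MonotoneOn g (Set.Iic b) := by
          apply monotoneOn_of_hasDerivWithinAt_nonneg (convex_Iic b)
            (fun x _ => (hgderiv x).continuousAt.continuousWithinAt)
            (fun x _ => (hgderiv x).hasDerivWithinAt)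
          intro x hx
          rw [interior_Iic] at hx
          have := hanti (le_trans (le_of_lt hx) hb) hb (le_of_lt hx)
          linarith
        have := hmono (Set.mem_Iic.mpr hab) (Set.mem_Iic.mpr le_rfl) hab
        simpa [hg] using this
      · -- b < a ≤ 0 : g is antitone on Icc b 0
        have hanti' : AntitoneOn g (Set.Icc b 0) := by
          apply antitoneOn_of_hasDerivWithinAt_nonpos (convex_Icc b 0)
            (fun x _ => (hgderiv x).continuousAt.continuousWithinAt)
            (fun x _ => (hgderiv x).hasDerivWithinAt)
          intro x hx
          have hx' := interior_subset hx
          have := hanti hb (le_trans hx'.2 le_rfl) hx'.1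
          linarith
        have hb0 : b ≤ (0 : ℝ) := hb
        have := hanti' (Set.mem_Icc.mpr ⟨le_rfl, hb⟩)
          (Set.mem_Icc.mpr ⟨le_of_lt hab, ha⟩) (le_of_lt hab)
        simpa [hg] using this
    have hga' : etaF p lam Lam a ≤ etaF p lam Lam b + etaF' p lam Lam b * (a - b) := by
      simp only [hg] at hga; linarith
    unfold etaF etaF' at hga'
    nlinarith [sq_nonneg (a - b)]
end

section
/- (Discrete Gagliardo–Nirenberg–Sobolev inequality on ℤⁿ) Let n ≥ 2, q > 1, γ ≥ q, and q' = q/(q−1). There exists a constant C = C(q, n, γ) such that for every u ∈ l^q(ℤⁿ), ‖u‖_{l^{γn/(n−1)}}^γ ≤ C·|u|_{1,q}·‖u‖_{l^{(γ−1)q'}}^{γ−1}, where |u|_{1,q} = (Σ_{x∈ℤⁿ}Σ_{y∼x}|u(y)−u(x)|^q)^{1/q}. -/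
open Finset

noncomputable section

/-- Vertices of the lattice graph `ℤⁿ`. -/
abbrev LV (n : ℕ) := Fin n → ℤ

/-- The set of neighbors of a vertex `x` in the lattice graph `ℤⁿ`
(the points differing from `x` by `±1` in exactly one coordinate). -/
def latNbrs {n : ℕ} (x : LV n) : Finset (LV n) :=
  Finset.image (fun p : Fin n × Bool =>
    Function.update x p.1 (x p.1 + (if p.2 then 1 else -1))) Finset.univ

/-- The graph Laplacian on `ℤⁿ`: `Δu(x) = Σ_{y∼x} (u(y) - u(x))`. -/
def latLap {n : ℕ} (u : LV n → ℝ) (x : LV n) : ℝ :=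
  ∑ y ∈ latNbrs x, (u y - u x)

/-- The boundary `∂Ω = {y ∉ Ω : ∃ x ∈ Ω, y ∼ x}` of a finite set `Ω ⊂ ℤⁿ`. -/
def latBdry {n : ℕ} (Ω : Finset (LV n)) : Finset (LV n) :=
  Ω.biUnion latNbrs \ Ω

/-- The closure `Ω̄ = Ω ∪ ∂Ω`. -/
def latClosure {n : ℕ} (Ω : Finset (LV n)) : Finset (LV n) :=
  Ω ∪ latBdry Ω

/-- The bilinear Dirichlet form
`E_Ω(u,v) = (1/2) Σ_{x,y ∈ Ω̄, x∼y} (u(y)-u(x))(v(y)-v(x))`. -/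
def latEnergy {n : ℕ} (Ω : Finset (LV n)) (u v : LV n → ℝ) : ℝ :=
  (1 / 2) * ∑ x ∈ latClosure Ω, ∑ y ∈ latNbrs x ∩ latClosure Ω,
    (u y - u x) * (v y - v x)

/-- The source term `h = 4π Σ_{j=1}^M n_j δ_{p_j}`. -/
def chernH {n M : ℕ} (nj : Fin M → ℕ) (pts : Fin M → LV n) (x : LV n) : ℝ :=
  4 * Real.pi * ∑ j, (nj j : ℝ) * (if x = pts j then 1 else 0)

/-- The `l^r` norm `(Σ_{x∈ℤⁿ} |u(x)|^r)^{1/r}` with respect to counting measure. -/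
def lnorm {n : ℕ} (u : LV n → ℝ) (r : ℝ) : ℝ :=
  (∑' x : LV n, |u x| ^ r) ^ (1 / r)

/-- The discrete `W^{1,q}` gradient seminorm
`|u|_{1,q} = (Σ_{x∈ℤⁿ} Σ_{y∼x} |u(y)-u(x)|^q)^{1/q}`. -/
def semiNorm1 {n : ℕ} (u : LV n → ℝ) (q : ℝ) : ℝ :=
  (∑' x : LV n, ∑ y ∈ latNbrs x, |u y - u x| ^ q) ^ (1 / q)

/-!
Apply the `ℓ¹` Sobolev inequality `‖v‖_{n/(n-1)} ≤ Σ_x Σ_{y∼x} |v y - v x|` to `v = |u|^γ`.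
Since `||a|^γ - |b|^γ| ≤ γ (|a|^{γ-1} + |b|^{γ-1}) |a - b|`, Hölder's inequality over the
edges bounds the right-hand side by `|u|_{1,q}` times `‖u‖_{(γ-1)q'}^{γ-1}`, up to the factor
`γ (2^{q'-1} · 4n)^{1/q'}`: convexity of `t ↦ t^{q'}`, and every vertex is an endpoint of `4n`
oriented edges.

The `ℓ¹` Sobolev inequality comes from the Gagliardo (Loomis–Whitney) inequality
`lintegral_prod_lintegral_pow_le` for the counting measure on `ℤⁿ`, fed with the
one-dimensional bound `|v x| ≤ Σ_t |v (x + (t+1) eᵢ) - v (x + t eᵢ)|` along every coordinate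
line, which holds as soon as `v` vanishes at infinity.

The estimate is proved for `ℝ≥0∞`-valued sums and any `u` vanishing at infinity; for `u ∈ l^q`
and `γ ≥ q` all three sums are finite, so it transfers to the real-valued norms.
-/

open MeasureTheory Filter Topology Function
open scoped ENNReal

theorem rpow_sub_rpow_le_mul_rpow_mul_sub {γ a b : ℝ} (hγ : 1 ≤ γ) (hb : 0 ≤ b) (hba : b ≤ a) :
    a ^ γ - b ^ γ ≤ γ * a ^ (γ - 1) * (a - b) := by
  obtain rfl | ha := (hb.trans hba).eq_or_lt
  · rw [le_antisymm hba hb, Real.zero_rpow (by linarith)]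
    simp
  have hγa : a ^ γ = a ^ (γ - 1) * a := by
    rw [← Real.rpow_add_one ha.ne']; ring_nf
  have bernoulli := one_add_mul_self_le_rpow_one_add
    (by linarith [div_nonneg hb ha.le] : -1 ≤ b / a - 1) hγ
  rw [add_sub_cancel, Real.div_rpow hb ha.le, le_div_iff₀ (by positivity)] at bernoulli
  have : b / a * a ^ γ = a ^ (γ - 1) * b := by rw [hγa]; field_simp
  nlinarith

theorem abs_abs_rpow_sub_abs_rpow_le {γ : ℝ} (hγ : 1 ≤ γ) (a b : ℝ) :
    |(|a| ^ γ - |b| ^ γ)| ≤ γ * (|a| ^ (γ - 1) + |b| ^ (γ - 1)) * |a - b| := by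
  wlog hab : |b| ≤ |a| generalizing a b
  · rw [abs_sub_comm, abs_sub_comm a, add_comm]
    exact this b a (le_of_not_ge hab)
  have hpow : |b| ^ γ ≤ |a| ^ γ := Real.rpow_le_rpow (abs_nonneg _) hab (by linarith)
  rw [abs_of_nonneg (sub_nonneg.2 hpow)]
  calc |a| ^ γ - |b| ^ γ ≤ γ * |a| ^ (γ - 1) * (|a| - |b|) :=
        rpow_sub_rpow_le_mul_rpow_mul_sub hγ (abs_nonneg b) hab
    _ ≤ γ * (|a| ^ (γ - 1) + |b| ^ (γ - 1)) * |a - b| := by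
        gcongr
        · exact le_add_of_nonneg_right (by positivity)
        · exact abs_sub_abs_le_abs_sub a b

theorem enorm_abs_rpow_sub_abs_rpow_le {γ : ℝ} (hγ : 1 ≤ γ) (a b : ℝ) :
    ‖|a| ^ γ - |b| ^ γ‖ₑ ≤ ENNReal.ofReal γ * (‖a‖ₑ ^ (γ - 1) + ‖b‖ₑ ^ (γ - 1)) * ‖a - b‖ₑ := by
  simp only [Real.enorm_eq_ofReal_abs]
  rw [ENNReal.ofReal_rpow_of_nonneg (abs_nonneg a) (by linarith),
    ENNReal.ofReal_rpow_of_nonneg (abs_nonneg b) (by linarith),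
    ← ENNReal.ofReal_add (by positivity) (by positivity), ← ENNReal.ofReal_mul (by linarith),
    ← ENNReal.ofReal_mul (by positivity)]
  exact ENNReal.ofReal_le_ofReal (abs_abs_rpow_sub_abs_rpow_le hγ a b)

theorem memℓp_ofReal_iff {α : Type*} {u : α → ℝ} {q : ℝ} (hq : 0 < q) :
    Memℓp u (ENNReal.ofReal q) ↔ Summable fun x => |u x| ^ q := by
  simpa [ENNReal.toReal_ofReal hq.le] using
    memℓp_gen_iff (p := ENNReal.ofReal q) (f := u) (by rwa [ENNReal.toReal_ofReal hq.le])

theorem summable_abs_rpow_of_le {α : Type*} {u : α → ℝ} {q r : ℝ} (hq : 0 < q) (hqr : q ≤ r)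
    (hu : Summable fun x => |u x| ^ q) : Summable fun x => |u x| ^ r :=
  (memℓp_ofReal_iff (hq.trans_le hqr)).1
    (((memℓp_ofReal_iff hq).2 hu).of_exponent_ge (ENNReal.ofReal_le_ofReal hqr))

theorem tendsto_cofinite_zero_of_summable_abs_rpow {α : Type*} {u : α → ℝ} {q : ℝ} (hq : 0 < q)
    (hu : Summable fun x => |u x| ^ q) : Tendsto u cofinite (𝓝 0) := by
  rw [tendsto_zero_iff_abs_tendsto_zero]
  have := hu.tendsto_cofinite_zero.rpow_const (p := 1 / q) (Or.inr (by positivity))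
  rw [Real.zero_rpow (by positivity)] at this
  refine this.congr fun x => ?_
  rw [← Real.rpow_mul (abs_nonneg _), mul_one_div_cancel hq.ne', Real.rpow_one]
  rfl

theorem ENNReal.tsum_mul_le_Lp_mul_Lq {α : Type*} {p q : ℝ} (hpq : p.HolderConjugate q)
    (f g : α → ℝ≥0∞) :
    ∑' a, f a * g a ≤ (∑' a, f a ^ p) ^ (1 / p) * (∑' a, g a ^ q) ^ (1 / q) := by
  let _ : MeasurableSpace α := ⊤
  simpa only [Pi.mul_apply, lintegral_count] using
    ENNReal.lintegral_mul_le_Lp_mul_Lq Measure.count hpq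
      (Measurable.of_discrete (f := f)).aemeasurable (Measurable.of_discrete (f := g)).aemeasurable

theorem MeasureTheory.Measure.pi_count {ι : Type*} [Fintype ι] {A : ι → Type*}
    [∀ i, Countable (A i)] [∀ i, MeasurableSpace (A i)] [∀ i, MeasurableSingletonClass (A i)] :
    Measure.pi (fun i => (Measure.count : Measure (A i))) = Measure.count := by
  refine Measure.ext_of_singleton fun x => ?_
  rw [Measure.count_singleton, ← Set.univ_pi_singleton, Measure.pi_pi]
  simp

theorem enorm_le_tsum_enorm_sub {E : Type*} [NormedAddCommGroup E] {w : ℤ → E}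
    (hw : Tendsto w atTop (𝓝 0)) (a : ℤ) :
    ‖w a‖ₑ ≤ ∑' t, ‖w (t + 1) - w t‖ₑ := by
  have telescope : ∀ N : ℕ, ‖w a‖ₑ ≤ ‖w (a + N)‖ₑ + ∑' t, ‖w (t + 1) - w t‖ₑ := by
    intro N
    have hsum : w a = w (a + N) - ∑ k ∈ Finset.range N, (w (a + (k + 1 : ℕ)) - w (a + k)) := by
      rw [Finset.sum_range_sub (fun k : ℕ => w (a + k))]
      simp
    calc ‖w a‖ₑ ≤ ‖w (a + N)‖ₑ + ∑ k ∈ Finset.range N, ‖w (a + k + 1) - w (a + k)‖ₑ := by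
          rw [hsum]
          refine enorm_sub_le.trans (add_le_add_right ((enorm_sum_le _ _).trans ?_) _)
          simp [add_assoc]
      _ ≤ ‖w (a + N)‖ₑ + ∑' t, ‖w (t + 1) - w t‖ₑ := by
          gcongr
          exact (ENNReal.sum_le_tsum _).trans (ENNReal.tsum_comp_le_tsum_of_injective
            (fun k l h => by simpa using h) (fun t => ‖w (t + 1) - w t‖ₑ))
  have hlim : Tendsto (fun N : ℕ => ‖w (a + N)‖ₑ + ∑' t, ‖w (t + 1) - w t‖ₑ) atTop
      (𝓝 (0 + ∑' t, ‖w (t + 1) - w t‖ₑ)) := by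
    refine Tendsto.add ?_ tendsto_const_nhds
    simpa using (hw.comp (tendsto_atTop_add_const_left _ a tendsto_natCast_atTop_atTop)).enorm
  simpa using ge_of_tendsto' hlim telescope

section Lattice

variable {n : ℕ}

def latStep (p : Fin n × Bool) : LV n :=
  Pi.single p.1 (if p.2 then 1 else -1)

theorem latStep_injective : Injective (latStep (n := n)) := by
  rintro ⟨j, b⟩ ⟨j', b'⟩ h
  have hj : j = j' := by
    by_contra hne
    have := congrFun h j
    cases b <;> simp [latStep, hne] at this
  subst hj
  have := congrFun h j
  cases b <;> cases b' <;> simp_all [latStep]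

theorem latNbrs_eq_image (x : LV n) : latNbrs x = univ.image fun p => x + latStep p := by
  refine Finset.image_congr fun p _ => funext fun i => ?_
  by_cases h : i = p.1
  · subst h; simp [latStep]
  · simp [latStep, h]

theorem sum_latNbrs {M : Type*} [AddCommMonoid M] (x : LV n) (f : LV n → M) :
    ∑ y ∈ latNbrs x, f y = ∑ p, f (x + latStep p) := by
  rw [latNbrs_eq_image, sum_image fun p _ p' _ h => latStep_injective (add_left_cancel h)]

theorem card_latNbrs (x : LV n) : #(latNbrs x) = 2 * n := by
  rw [latNbrs_eq_image,
    card_image_of_injective _ fun p p' h => latStep_injective (add_left_cancel h)]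
  simp [mul_comm]

theorem tsum_sum_latNbrs (F : LV n → LV n → ℝ≥0∞) :
    ∑' x, ∑ y ∈ latNbrs x, F x y = ∑' z : LV n × (Fin n × Bool), F z.1 (z.1 + latStep z.2) := by
  simp only [ENNReal.tsum_prod', tsum_fintype, sum_latNbrs]

theorem tsum_sum_latNbrs_const (f : LV n → ℝ≥0∞) :
    ∑' x, ∑ _y ∈ latNbrs x, f x = 2 * n * ∑' x, f x := by
  simp [card_latNbrs, ENNReal.tsum_mul_left]

theorem tsum_sum_latNbrs_apply (f : LV n → ℝ≥0∞) :
    ∑' x, ∑ y ∈ latNbrs x, f y = 2 * n * ∑' x, f x := by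
  simp_rw [sum_latNbrs]
  rw [Summable.tsum_finsetSum fun _ _ => ENNReal.summable]
  have htranslate (p : Fin n × Bool) : ∑' x, f (x + latStep p) = ∑' x, f x :=
    (Equiv.addRight (latStep p)).tsum_eq f
  simp [htranslate, mul_comm]

theorem summable_sum_latNbrs_abs_sub_rpow {u : LV n → ℝ} {q : ℝ} (hq : 0 < q)
    (hu : Summable fun x => |u x| ^ q) :
    Summable fun x => ∑ y ∈ latNbrs x, |u y - u x| ^ q := by
  simp_rw [sum_latNbrs]
  refine summable_sum fun p _ => (memℓp_ofReal_iff hq).1 ?_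
  have htranslate : Memℓp (fun x => u (x + latStep p)) (ENNReal.ofReal q) :=
    (memℓp_ofReal_iff hq).2 ((Equiv.addRight (latStep p)).summable_iff.2 hu)
  exact htranslate.sub ((memℓp_ofReal_iff hq).2 hu)

theorem update_add_one_mem_latNbrs (x : LV n) (i : Fin n) (t : ℤ) :
    update x i (t + 1) ∈ latNbrs (update x i t) :=
  Finset.mem_image.2 ⟨(i, true), Finset.mem_univ _, by simp⟩

variable {E : Type*} [NormedAddCommGroup E]

def latGradENorm (v : LV n → E) (x : LV n) : ℝ≥0∞ :=
  ∑ y ∈ latNbrs x, ‖v y - v x‖ₑ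

theorem enorm_le_tsum_latGradENorm_update {v : LV n → E} (hv : Tendsto v cofinite (𝓝 0))
    (x : LV n) (i : Fin n) : ‖v x‖ₑ ≤ ∑' t : ℤ, latGradENorm v (update x i t) := by
  have hline : Tendsto (fun t : ℤ => v (update x i t)) atTop (𝓝 0) :=
    (hv.comp (update_injective x i).tendsto_cofinite).mono_left atTop_le_cofinite
  calc ‖v x‖ₑ = ‖v (update x i (x i))‖ₑ := by rw [update_eq_self]
    _ ≤ ∑' t, ‖v (update x i (t + 1)) - v (update x i t)‖ₑ := enorm_le_tsum_enorm_sub hline (x i)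
    _ ≤ ∑' t : ℤ, latGradENorm v (update x i t) := ENNReal.tsum_le_tsum fun t =>
        Finset.single_le_sum (f := fun y => ‖v y - v (update x i t)‖ₑ) (fun _ _ => zero_le)
          (update_add_one_mem_latNbrs x i t)

theorem tsum_enorm_rpow_le_tsum_latGradENorm_rpow (hn : 2 ≤ n) {v : LV n → E}
    (hv : Tendsto v cofinite (𝓝 0)) :
    ∑' x, ‖v x‖ₑ ^ ((n : ℝ) / (n - 1)) ≤ (∑' x, latGradENorm v x) ^ ((n : ℝ) / (n - 1)) := by
  have hn' : (1 : ℝ) < n := by exact_mod_cast hn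
  have hp : Real.HolderConjugate (Fintype.card (Fin n) : ℝ) ((n : ℝ) / (n - 1)) := by
    simpa [Real.conjExponent] using Real.HolderConjugate.conjExponent hn'
  have hpi : Measure.pi (fun _ : Fin n => (Measure.count : Measure ℤ)) = Measure.count :=
    Measure.pi_count
  calc ∑' x, ‖v x‖ₑ ^ ((n : ℝ) / (n - 1))
      = ∫⁻ x, ∏ _i : Fin n, ‖v x‖ₑ ^ (1 / ((n : ℝ) - 1)) ∂Measure.pi fun _ => Measure.count := by
        rw [hpi, lintegral_count]
        congr 1 with x
        rw [Finset.prod_const, Finset.card_univ, Fintype.card_fin, ← ENNReal.rpow_natCast,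
          ← ENNReal.rpow_mul]
        congr 1
        field_simp
    _ ≤ ∫⁻ x, ∏ i : Fin n, (∫⁻ t, latGradENorm v (update x i t) ∂Measure.count)
          ^ (1 / ((n : ℝ) - 1)) ∂Measure.pi fun _ => Measure.count := by
        gcongr with x i
        rw [lintegral_count]
        exact enorm_le_tsum_latGradENorm_update hv x i
    _ ≤ (∫⁻ x, latGradENorm v x ∂Measure.pi fun _ => Measure.count) ^ ((n : ℝ) / (n - 1)) := by
        simpa using
          lintegral_prod_lintegral_pow_le _ hp (Measurable.of_discrete (f := latGradENorm v))
    _ = (∑' x, latGradENorm v x) ^ ((n : ℝ) / (n - 1)) := by rw [hpi, lintegral_count]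

theorem tsum_sum_latNbrs_mul_le_Lp_mul_Lq {p q : ℝ} (hpq : p.HolderConjugate q)
    (F G : LV n → LV n → ℝ≥0∞) :
    ∑' x, ∑ y ∈ latNbrs x, F x y * G x y
      ≤ (∑' x, ∑ y ∈ latNbrs x, F x y ^ p) ^ (1 / p)
        * (∑' x, ∑ y ∈ latNbrs x, G x y ^ q) ^ (1 / q) := by
  simp only [tsum_sum_latNbrs]
  exact ENNReal.tsum_mul_le_Lp_mul_Lq hpq _ _

theorem tsum_sum_latNbrs_add_rpow_le {p : ℝ} (hp : 1 ≤ p) (f : LV n → ℝ≥0∞) :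
    ∑' x, ∑ y ∈ latNbrs x, (f y + f x) ^ p ≤ 2 ^ (p - 1) * (4 * n) * ∑' x, f x ^ p :=
  calc ∑' x, ∑ y ∈ latNbrs x, (f y + f x) ^ p
      ≤ ∑' x, ∑ y ∈ latNbrs x, 2 ^ (p - 1) * (f y ^ p + f x ^ p) := by
        gcongr with x y
        exact ENNReal.rpow_add_le_mul_rpow_add_rpow _ _ hp
    _ = 2 ^ (p - 1) * (4 * n) * ∑' x, f x ^ p := by
        simp only [← mul_sum, sum_add_distrib, ENNReal.tsum_mul_left, ENNReal.tsum_add,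
          tsum_sum_latNbrs_const, tsum_sum_latNbrs_apply]
        ring

theorem tsum_enorm_rpow_le_tsum_latGradENorm_abs_rpow (hn : 2 ≤ n) {γ : ℝ} (hγ : 0 < γ)
    {u : LV n → ℝ} (hu : Tendsto u cofinite (𝓝 0)) :
    (∑' x, ‖u x‖ₑ ^ (γ * n / (n - 1))) ^ ((n - 1 : ℝ) / n)
      ≤ ∑' x, latGradENorm (fun x => |u x| ^ γ) x := by
  have hn' : (1 : ℝ) < n := by exact_mod_cast hn
  have hv : Tendsto (fun x => |u x| ^ γ) cofinite (𝓝 0) := by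
    simpa [Real.zero_rpow hγ.ne'] using hu.abs.rpow_const (Or.inr hγ.le)
  have hvu (x : LV n) : ‖|u x| ^ γ‖ₑ = ‖u x‖ₑ ^ γ := by
    rw [Real.enorm_eq_ofReal_abs, Real.enorm_eq_ofReal_abs, abs_of_nonneg (by positivity),
      ENNReal.ofReal_rpow_of_nonneg (abs_nonneg _) hγ.le]
  have hp : (0 : ℝ) < n / (n - 1) := div_pos (by linarith) (by linarith)
  rw [← inv_div (n : ℝ), ENNReal.rpow_inv_le_iff hp]
  simpa only [hvu, ← ENNReal.rpow_mul, mul_div_assoc] using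
    tsum_enorm_rpow_le_tsum_latGradENorm_rpow hn hv

def gnsConst (n : ℕ) (q' γ : ℝ) : ℝ≥0∞ :=
  ENNReal.ofReal γ * (2 ^ (q' - 1) * (4 * n)) ^ (1 / q')

theorem gnsConst_ne_top {q' γ : ℝ} (hq' : 0 < q') : gnsConst n q' γ ≠ ⊤ := by
  unfold gnsConst
  finiteness

theorem gnsConst_ne_zero {q' γ : ℝ} (hn : n ≠ 0) (hγ : 0 < γ) : gnsConst n q' γ ≠ 0 := by
  unfold gnsConst
  exact mul_ne_zero (ENNReal.ofReal_pos.2 hγ).ne' (by positivity)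

theorem discrete_GNS_ennreal (hn : 2 ≤ n) {q q' γ : ℝ} (hqq' : q.HolderConjugate q') (hγ : 1 ≤ γ)
    {u : LV n → ℝ} (hu : Tendsto u cofinite (𝓝 0)) :
    (∑' x, ‖u x‖ₑ ^ (γ * n / (n - 1))) ^ ((n - 1 : ℝ) / n)
      ≤ gnsConst n q' γ * (∑' x, ∑ y ∈ latNbrs x, ‖u y - u x‖ₑ ^ q) ^ (1 / q)
        * (∑' x, ‖u x‖ₑ ^ ((γ - 1) * q')) ^ (1 / q') := by
  set A : LV n → ℝ≥0∞ := fun x => ‖u x‖ₑ ^ (γ - 1)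
  have hA : ∑' x, ∑ y ∈ latNbrs x, (ENNReal.ofReal γ * (A y + A x)) ^ q'
      ≤ ENNReal.ofReal γ ^ q' * (2 ^ (q' - 1) * (4 * n) * ∑' x, ‖u x‖ₑ ^ ((γ - 1) * q')) := by
    simp only [ENNReal.mul_rpow_of_nonneg _ _ hqq'.symm.nonneg, ← mul_sum, ENNReal.tsum_mul_left]
    gcongr
    simpa only [A, ← ENNReal.rpow_mul] using tsum_sum_latNbrs_add_rpow_le hqq'.symm.lt.le A
  calc (∑' x, ‖u x‖ₑ ^ (γ * n / (n - 1))) ^ ((n - 1 : ℝ) / n)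
      ≤ ∑' x, latGradENorm (fun x => |u x| ^ γ) x :=
        tsum_enorm_rpow_le_tsum_latGradENorm_abs_rpow hn (by linarith) hu
    _ ≤ ∑' x, ∑ y ∈ latNbrs x, (ENNReal.ofReal γ * (A y + A x)) * ‖u y - u x‖ₑ :=
        ENNReal.tsum_le_tsum fun x => sum_le_sum fun y _ =>
          enorm_abs_rpow_sub_abs_rpow_le hγ (u y) (u x)
    _ ≤ (∑' x, ∑ y ∈ latNbrs x, (ENNReal.ofReal γ * (A y + A x)) ^ q') ^ (1 / q')
          * (∑' x, ∑ y ∈ latNbrs x, ‖u y - u x‖ₑ ^ q) ^ (1 / q) :=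
        tsum_sum_latNbrs_mul_le_Lp_mul_Lq hqq'.symm _ _
    _ ≤ (ENNReal.ofReal γ ^ q' * (2 ^ (q' - 1) * (4 * n) * ∑' x, ‖u x‖ₑ ^ ((γ - 1) * q')))
          ^ (1 / q') * (∑' x, ∑ y ∈ latNbrs x, ‖u y - u x‖ₑ ^ q) ^ (1 / q) := by
        gcongr
        exact hqq'.symm.one_div_nonneg
    _ = _ := by
        rw [gnsConst, ENNReal.mul_rpow_of_nonneg _ _ hqq'.symm.one_div_nonneg,
          ENNReal.mul_rpow_of_nonneg _ _ hqq'.symm.one_div_nonneg, one_div q',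
          ENNReal.rpow_rpow_inv hqq'.symm.ne_zero]
        ring

theorem lnorm_nonneg (u : LV n → ℝ) (r : ℝ) : 0 ≤ lnorm u r :=
  Real.rpow_nonneg (tsum_nonneg fun _ => by positivity) _

theorem semiNorm1_nonneg (u : LV n → ℝ) (q : ℝ) : 0 ≤ semiNorm1 u q :=
  Real.rpow_nonneg (tsum_nonneg fun _ => by positivity) _

theorem ofReal_lnorm_rpow {u : LV n → ℝ} {r e : ℝ} (hr : 0 < r) (he : 0 ≤ e)
    (hu : Summable fun x => |u x| ^ r) :
    ENNReal.ofReal (lnorm u r ^ e) = (∑' x, ‖u x‖ₑ ^ r) ^ (e / r) := by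
  have hsum : 0 ≤ ∑' x, |u x| ^ r := tsum_nonneg fun x => by positivity
  rw [lnorm, ← Real.rpow_mul hsum, one_div_mul_eq_div,
    ← ENNReal.ofReal_rpow_of_nonneg hsum (by positivity),
    ENNReal.ofReal_tsum_of_nonneg (fun x => by positivity) hu]
  simp only [Real.enorm_eq_ofReal_abs, ENNReal.ofReal_rpow_of_nonneg (abs_nonneg _) hr.le]

theorem ofReal_semiNorm1 {u : LV n → ℝ} {q : ℝ} (hq : 0 < q)
    (hu : Summable fun x => ∑ y ∈ latNbrs x, |u y - u x| ^ q) :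
    ENNReal.ofReal (semiNorm1 u q) = (∑' x, ∑ y ∈ latNbrs x, ‖u y - u x‖ₑ ^ q) ^ (1 / q) := by
  have hsum : 0 ≤ ∑' x, ∑ y ∈ latNbrs x, |u y - u x| ^ q := tsum_nonneg fun x => by positivity
  rw [semiNorm1, ← ENNReal.ofReal_rpow_of_nonneg hsum (by positivity),
    ENNReal.ofReal_tsum_of_nonneg (fun x => by positivity) hu]
  congr 2 with x
  rw [ENNReal.ofReal_sum_of_nonneg fun y _ => by positivity]
  simp only [Real.enorm_eq_ofReal_abs, ENNReal.ofReal_rpow_of_nonneg (abs_nonneg _) hq.le]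

theorem lnorm_rpow_le_gnsConst_mul (hn : 2 ≤ n) {q q' γ : ℝ} (hqq' : q.HolderConjugate q')
    (hγ : q ≤ γ) {u : LV n → ℝ} (hu : Summable fun x => |u x| ^ q) :
    lnorm u (γ * n / (n - 1)) ^ γ
      ≤ (gnsConst n q' γ).toReal * semiNorm1 u q * lnorm u ((γ - 1) * q') ^ (γ - 1) := by
  have hn' : (1 : ℝ) < n := by exact_mod_cast hn
  have hq0 : 0 < q := hqq'.pos
  have hγ1 : 1 < γ := hqq'.lt.trans_le hγ
  have hP : q ≤ γ * n / (n - 1) := by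
    rw [le_div_iff₀ (by linarith)]; nlinarith
  have hS : q ≤ (γ - 1) * q' := by
    rw [← hqq'.sub_one_mul_conj]; gcongr; exact hqq'.symm.nonneg
  have hC := mul_nonneg (ENNReal.toReal_nonneg (a := gnsConst n q' γ)) (semiNorm1_nonneg u q)
  rw [← ENNReal.ofReal_le_ofReal_iff (mul_nonneg hC (Real.rpow_nonneg (lnorm_nonneg u _) _)),
    ENNReal.ofReal_mul hC, ENNReal.ofReal_mul ENNReal.toReal_nonneg,
    ENNReal.ofReal_toReal (gnsConst_ne_top hqq'.symm.pos),
    ofReal_lnorm_rpow (hq0.trans_le hP) (by linarith) (summable_abs_rpow_of_le hq0 hP hu),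
    ofReal_semiNorm1 hq0 (summable_sum_latNbrs_abs_sub_rpow hq0 hu),
    ofReal_lnorm_rpow (hq0.trans_le hS) (by linarith) (summable_abs_rpow_of_le hq0 hS hu)]
  have hexp₁ : γ / (γ * n / (n - 1)) = (n - 1) / n := by field_simp
  have hexp₂ : (γ - 1) / ((γ - 1) * q') = 1 / q' := by
    field_simp [(by linarith : γ - 1 ≠ 0)]
  rw [hexp₁, hexp₂]
  exact discrete_GNS_ennreal hn hqq' hγ1.le (tendsto_cofinite_zero_of_summable_abs_rpow hq0 hu)

end Lattice

/-- Discrete Gagliardo–Nirenberg–Sobolev inequality on `ℤⁿ`: for `n ≥ 2`, `q > 1`,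
`γ ≥ q` and `q' = q/(q-1)` there is a constant `C = C(q,n,γ)` such that for every
`u ∈ l^q(ℤⁿ)`:
`‖u‖_{l^{γn/(n-1)}}^γ ≤ C |u|_{1,q} ‖u‖_{l^{(γ-1)q'}}^{γ-1}`. -/
theorem discrete_GNS (n : ℕ) (hn : 2 ≤ n) (q γ : ℝ) (hq : 1 < q) (hγ : q ≤ γ) :
    ∃ C : ℝ, 0 < C ∧ ∀ u : LV n → ℝ, Summable (fun x => |u x| ^ q) →
      lnorm u (γ * n / (n - 1)) ^ γ
        ≤ C * semiNorm1 u q * lnorm u ((γ - 1) * (q / (q - 1))) ^ (γ - 1) := by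
  have hqq' : q.HolderConjugate (q / (q - 1)) := .conjExponent hq
  exact ⟨(gnsConst n (q / (q - 1)) γ).toReal,
    ENNReal.toReal_pos (gnsConst_ne_zero (by omega) (by linarith)) (gnsConst_ne_top hqq'.symm.pos),
    fun u hu => lnorm_rpow_le_gnsConst_mul hn hqq' hγ hu⟩
end
end

section
/- Any solution ū of Δū = λe^ū(e^ū−1)^{2p+1} + 4πΣ_{j=1}^M n_jδ_{p_j} on all of ℤⁿ with ū(x) → 0 as d(x,0) → ∞ satisfies ū ≤ 0 everywhere on ℤⁿ. -/
open Finset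

noncomputable section

/-!
If `u` were positive somewhere, its decay at infinity would give it a positive global maximum
at some `x₁`. There `Δu(x₁) ≤ 0`, whereas the right-hand side of the equation is positive: the
nonlinearity is positive where `u > 0` and the vortex source term is nonnegative.
-/

open Filter Topology

theorem finite_setOf_sum_natAbs_lt (n R : ℕ) :
    {x : Fin n → ℤ | ∑ i, (x i).natAbs < R}.Finite := by
  refine (Finset.Icc (fun _ => -(R : ℤ)) (fun _ => (R : ℤ))).finite_toSet.subset fun x hx => ?_
  have hcoord : ∀ i, |x i| ≤ R := fun i => by
    have : (x i).natAbs ≤ R :=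
      (Finset.single_le_sum (fun j _ => Nat.zero_le (x j).natAbs) (mem_univ i)).trans hx.le
    rw [Int.abs_eq_natAbs]
    exact_mod_cast this
  simp only [coe_Icc, Set.mem_Icc, Pi.le_def]
  exact ⟨fun i => neg_le_of_abs_le (hcoord i), fun i => le_of_abs_le (hcoord i)⟩

theorem tendsto_cofinite_of_forall_abs_lt_of_le_sum_natAbs {n : ℕ} {u : (Fin n → ℤ) → ℝ}
    (hu : ∀ ε > 0, ∃ R : ℕ, ∀ x : Fin n → ℤ, R ≤ ∑ i, (x i).natAbs → |u x| < ε) :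
    Tendsto u cofinite (𝓝 0) := by
  refine Metric.tendsto_nhds.2 fun ε hε => ?_
  obtain ⟨R, hR⟩ := hu ε hε
  refine (finite_setOf_sum_natAbs_lt n R).subset fun x hx => ?_
  simp only [Set.mem_ofPred_eq, Real.dist_eq, sub_zero] at hx ⊢
  by_contra! hfar
  exact hx (hR x hfar)

theorem exists_forall_le_of_tendsto_cofinite_zero {α : Type*} {f : α → ℝ}
    (hf : Tendsto f cofinite (𝓝 0)) {x₀ : α} (hx₀ : 0 < f x₀) : ∃ x₁, ∀ y, f y ≤ f x₁ := by
  have hfin : {y | f x₀ ≤ f y}.Finite := by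
    simpa only [not_lt] using eventually_cofinite.1 (hf.eventually (gt_mem_nhds hx₀))
  obtain ⟨x₁, hx₁, hmax⟩ := Set.exists_max_image _ f hfin ⟨x₀, le_refl (f x₀)⟩
  refine ⟨x₁, fun y => ?_⟩
  rcases le_or_gt (f x₀) (f y) with hy | hy
  · exact hmax y hy
  · exact hy.le.trans hx₁

theorem latLap_nonpos_of_forall_le {n : ℕ} {u : LV n → ℝ} {x : LV n}
    (hmax : ∀ y ∈ latNbrs x, u y ≤ u x) : latLap u x ≤ 0 :=
  Finset.sum_nonpos fun y hy => sub_nonpos.2 (hmax y hy)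

theorem chernH_nonneg {n M : ℕ} (nj : Fin M → ℕ) (pts : Fin M → LV n) (x : LV n) :
    0 ≤ chernH nj pts x := by
  unfold chernH
  positivity

theorem mul_exp_mul_exp_sub_one_pow_pos {lam t : ℝ} (hlam : 0 < lam) (ht : 0 < t) (k : ℕ) :
    0 < lam * Real.exp t * (Real.exp t - 1) ^ k := by
  have : 0 < Real.exp t - 1 := sub_pos.2 (Real.one_lt_exp_iff.2 ht)
  positivity

theorem global_solution_nonpos_general (n : ℕ) (lam : ℝ) (hlam : 0 < lam) (p : ℕ)
    (M : ℕ) (nj : Fin M → ℕ) (pts : Fin M → LV n)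
    (u : LV n → ℝ)
    (hsol : ∀ x, latLap u x
        = lam * Real.exp (u x) * (Real.exp (u x) - 1) ^ (2 * p + 1) + chernH nj pts x)
    (hlim : ∀ ε > 0, ∃ R : ℕ, ∀ x : LV n, R ≤ ∑ i, (x i).natAbs → |u x| < ε) :
    ∀ x, u x ≤ 0 := by
  by_contra! ⟨x₀, hx₀⟩
  obtain ⟨x₁, hx₁⟩ := exists_forall_le_of_tendsto_cofinite_zero
    (tendsto_cofinite_of_forall_abs_lt_of_le_sum_natAbs hlim) hx₀
  have hlap : latLap u x₁ ≤ 0 := latLap_nonpos_of_forall_le fun y _ => hx₁ y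
  have hrhs := mul_exp_mul_exp_sub_one_pow_pos hlam (hx₀.trans_le (hx₁ x₀)) (2 * p + 1)
  linarith [hsol x₁, chernH_nonneg nj pts x₁]

/-- Any solution `ū` of `Δū = λe^ū(e^ū-1)^{2p+1} + 4πΣn_jδ_{p_j}` on all of `ℤⁿ`
with `ū(x) → 0` as `d(x,0) → ∞` satisfies `ū ≤ 0` everywhere. -/
theorem global_solution_nonpos (n : ℕ) (hn : 2 ≤ n) (lam : ℝ) (hlam : 0 < lam) (p : ℕ)
    (M : ℕ) (nj : Fin M → ℕ) (hnj : ∀ j, 0 < nj j) (pts : Fin M → LV n)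
    (u : LV n → ℝ)
    (hsol : ∀ x, latLap u x
        = lam * Real.exp (u x) * (Real.exp (u x) - 1) ^ (2 * p + 1) + chernH nj pts x)
    (hlim : ∀ ε > 0, ∃ R : ℕ, ∀ x : LV n, R ≤ ∑ i, (x i).natAbs → |u x| < ε) :
    ∀ x, u x ≤ 0 :=
  global_solution_nonpos_general n lam hlam p M nj pts u hsol hlim
end
end
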